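/- arXiv:2307.05629 — 2 statements merged into one kernel-verified Lean document; each statement's English description precedes it below -/
import Mathlib

section
/- Let ÷ satisfy AGM postulates (K−1)–(K−8) on a consistent deductively closed K ⊆ Φ₀. Then for all φ, ψ ∈ Φ₀: ψ ∈ K÷φ if and only if ψ ∈ K and ψ ∈ Cn((K÷φ) ∪ {¬φ}). -/
/-- Boolean propositional formulas over countably many atoms. -/
inductive Fm where
  | atom : ℕ → Fm
  | neg  : Fm → Fm
  | disj : Fm → Fm → Fm

namespace Fm

def imp (φ ψ : Fm) : Fm := disj (neg φ) ψ
def conj (φ ψ : Fm) : Fm := neg (disj (neg φ) (neg ψ))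
def biimp (φ ψ : Fm) : Fm := conj (imp φ ψ) (imp ψ φ)

def eval (v : ℕ → Bool) : Fm → Bool
  | atom n => v n
  | neg φ => !(eval v φ)
  | disj φ ψ => eval v φ || eval v ψ

def Taut (φ : Fm) : Prop := ∀ v : ℕ → Bool, eval v φ = true

end Fm

/-- Classical propositional consequence: ψ ∈ Cn K iff some finite list of members
of K has ψ as a tautological consequence. -/
def Cn (K : Set Fm) : Set Fm :=
  {ψ | ∃ l : List Fm, (∀ φ ∈ l, φ ∈ K) ∧
    ∀ v : ℕ → Bool, (∀ φ ∈ l, Fm.eval v φ = true) → Fm.eval v ψ = true}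

def Consistent (A : Set Fm) : Prop := Cn A ≠ Set.univ

/-- The eight AGM contraction postulates. -/
structure AGM (K : Set Fm) (div : Fm → Set Fm) : Prop where
  closure : ∀ φ : Fm, div φ = Cn (div φ)
  inclusion : ∀ φ : Fm, div φ ⊆ K
  vacuity : ∀ φ : Fm, φ ∉ K → K ⊆ div φ
  success : ∀ φ : Fm, ¬ Fm.Taut φ → φ ∉ div φ
  recovery : ∀ φ : Fm, φ ∈ K → K ⊆ Cn (div φ ∪ {φ})
  extensionality : ∀ φ ψ : Fm, Fm.Taut (Fm.biimp φ ψ) → div φ = div ψ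
  conjOverlap : ∀ φ ψ : Fm, div φ ∩ div ψ ⊆ div (Fm.conj φ ψ)
  conjInclusion : ∀ φ ψ : Fm, φ ∉ div (Fm.conj φ ψ) → div (Fm.conj φ ψ) ⊆ div φ

lemma mem_Cn_of_mem {A : Set Fm} {ψ : Fm} (h : ψ ∈ A) : ψ ∈ Cn A :=
  ⟨[ψ], by simpa using h, fun v hv => hv ψ (by simp)⟩

/-- Deduction theorem. -/
lemma deduction {A : Set Fm} {χ ψ : Fm} (h : ψ ∈ Cn (A ∪ {χ})) :
    Fm.imp χ ψ ∈ Cn A := by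
  classical
  obtain ⟨l, hl, hsem⟩ := h
  refine ⟨l.filter (· ≠ χ), ?_, ?_⟩
  · intro φ hφ
    simp only [List.mem_filter, decide_eq_true_eq] at hφ
    rcases hl φ hφ.1 with h | h
    · exact h
    · exact absurd h hφ.2
  · intro v hv
    simp only [Fm.imp, Fm.eval, Bool.or_eq_true, Bool.not_eq_true']
    by_cases hχ : Fm.eval v χ = true
    · right
      apply hsem
      intro φ hφ
      by_cases hne : φ = χ
      · exact hne ▸ hχ
      · exact hv φ (List.mem_filter.2 ⟨hφ, by simpa using hne⟩)
    · left; simpa using hχ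

lemma combine {A : Set Fm} {α β ψ : Fm} (h1 : α ∈ Cn A) (h2 : β ∈ Cn A)
    (h : ∀ v, Fm.eval v α = true → Fm.eval v β = true → Fm.eval v ψ = true) :
    ψ ∈ Cn A := by
  obtain ⟨l1, hl1, hs1⟩ := h1
  obtain ⟨l2, hl2, hs2⟩ := h2
  refine ⟨l1 ++ l2, ?_, ?_⟩
  · intro φ hφ
    rcases List.mem_append.1 hφ with h | h
    · exact hl1 φ h
    · exact hl2 φ h
  · intro v hv
    exact h v (hs1 v fun φ hφ => hv φ (List.mem_append.2 (Or.inl hφ)))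
      (hs2 v fun φ hφ => hv φ (List.mem_append.2 (Or.inr hφ)))

/-- ψ ∈ K÷φ iff ψ ∈ K and ψ ∈ Cn((K÷φ) ∪ {¬φ}). -/
theorem mem_div_iff (K : Set Fm) (hcons : Consistent K)
    (hclosed : K = Cn K) (div : Fm → Set Fm) (hagm : AGM K div) :
    ∀ φ ψ : Fm, ψ ∈ div φ ↔ ψ ∈ K ∧ ψ ∈ Cn (div φ ∪ {Fm.neg φ}) := by
  intro φ ψ
  constructor
  · intro h
    exact ⟨hagm.inclusion φ h, mem_Cn_of_mem (Set.mem_union_left _ h)⟩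
  · rintro ⟨hK, hCn⟩
    by_cases hφ : φ ∈ K
    · -- from recovery: ψ ∈ Cn(div φ ∪ {φ}), so imp φ ψ ∈ Cn (div φ)
      have h1 : Fm.imp φ ψ ∈ Cn (div φ) := deduction (hagm.recovery φ hφ hK)
      have h2 : Fm.imp (Fm.neg φ) ψ ∈ Cn (div φ) := deduction hCn
      have : ψ ∈ Cn (div φ) := by
        refine combine h1 h2 ?_
        intro v
        simp only [Fm.imp, Fm.eval, Bool.or_eq_true, Bool.not_eq_true']
        rcases Fm.eval v φ with _ | _ <;> simp
      rwa [← hagm.closure φ] at this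
    · exact hagm.vacuity φ hφ hK
end

section
/- Let K ⊆ Φ₀ be consistent and deductively closed and ÷ an AGM contraction function on K (satisfying (K−1)–(K−8)). On the canonical space S of maximally consistent sets, with 𝓑(s@) = ‖K‖ and f(s,‖φ‖) = ‖K÷¬φ‖ ∩ ‖φ‖, for every φ with ‖¬φ‖ ≠ ∅ and every ψ: ψ ∈ K÷φ if and only if ‖K‖ ⊆ ‖ψ‖ and ‖K÷φ‖ ∩ ‖¬φ‖ ⊆ ‖ψ‖. -/
/-- Maximally consistent set of formulas. -/
def MCS (Γ : Set Fm) : Prop :=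
  Consistent Γ ∧ ∀ Δ : Set Fm, Γ ⊆ Δ → Consistent Δ → Δ = Γ

/-- The canonical state space: maximally consistent sets. -/
def CS := {Γ : Set Fm // MCS Γ}

/-- ‖φ‖ for a formula. -/
def tsF (φ : Fm) : Set CS := {s | φ ∈ s.val}

/-- ‖Ψ‖ for a set of formulas. -/
def tsS (Ψ : Set Fm) : Set CS := {s | Ψ ⊆ s.val}

/-! Lemma 3(ii) writes `K ÷ φ` as `K ∩ Cn (K ÷ φ ∪ {¬φ})`. By the Lindenbaum lemma a formula
lies in `Cn A` exactly when it holds in every maximally consistent extension of `A`, i.e. when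
`‖A‖ ⊆ ‖ψ‖`, and `‖A ∪ {¬φ}‖ = ‖A‖ ∩ ‖¬φ‖`; so the two membership conditions of Lemma 3(ii)
become the two inclusions of the theorem. -/

open Fm

theorem subset_cn {A : Set Fm} : A ⊆ Cn A :=
  fun ψ h => ⟨[ψ], by simpa using h, fun v hv => hv ψ (List.mem_singleton_self ψ)⟩

theorem cn_mono {A B : Set Fm} (h : A ⊆ B) : Cn A ⊆ Cn B :=
  fun _ ⟨l, hl, hsem⟩ => ⟨l, fun φ hφ => h (hl φ hφ), hsem⟩

theorem exists_list_entails_of_forall_mem_cn {A : Set Fm} (l : List Fm)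
    (hl : ∀ φ ∈ l, φ ∈ Cn A) :
    ∃ m : List Fm, (∀ χ ∈ m, χ ∈ A) ∧
      ∀ v : ℕ → Bool, (∀ χ ∈ m, eval v χ = true) → ∀ φ ∈ l, eval v φ = true := by
  induction l with
  | nil => exact ⟨[], by simp, by simp⟩
  | cons φ l ih =>
    obtain ⟨m₁, hm₁A, hm₁⟩ := hl φ List.mem_cons_self
    obtain ⟨m₂, hm₂A, hm₂⟩ := ih fun χ hχ => hl χ (List.mem_cons_of_mem φ hχ)
    refine ⟨m₁ ++ m₂, ?_, fun v hv => ?_⟩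
    · simpa [or_imp, forall_and] using ⟨hm₁A, hm₂A⟩
    · simp only [List.mem_append, or_imp, forall_and] at hv
      exact List.forall_mem_cons.2 ⟨hm₁ v hv.1, hm₂ v hv.2⟩

theorem mem_cn_of_entails {A : Set Fm} {ψ : Fm} (l : List Fm) (hl : ∀ φ ∈ l, φ ∈ Cn A)
    (hsem : ∀ v : ℕ → Bool, (∀ φ ∈ l, eval v φ = true) → eval v ψ = true) : ψ ∈ Cn A :=
  let ⟨m, hmA, hm⟩ := exists_list_entails_of_forall_mem_cn l hl
  ⟨m, hmA, fun v hv => hsem v (hm v hv)⟩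

theorem cn_cn (A : Set Fm) : Cn (Cn A) = Cn A :=
  subset_antisymm (fun _ ⟨l, hl, hsem⟩ => mem_cn_of_entails l hl hsem) subset_cn

theorem imp_mem_cn_of_mem_cn_union {A : Set Fm} {α ψ : Fm} (h : ψ ∈ Cn (A ∪ {α})) :
    imp α ψ ∈ Cn A := by
  classical
  obtain ⟨l, hl, hsem⟩ := h
  refine ⟨l.filter (· ≠ α), fun χ hχ => ?_, fun v hv => ?_⟩
  · obtain ⟨hχl, hχα⟩ : χ ∈ l ∧ χ ≠ α := by simpa using hχ
    exact (hl χ hχl).resolve_right hχα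
  · cases hα : eval v α
    · simp [imp, eval, hα]
    · have hψ : eval v ψ = true := hsem v fun χ hχ => by
        by_cases hχα : χ = α
        · exact hχα ▸ hα
        · exact hv χ (by simpa [hχ] using hχα)
      simp [imp, eval, hψ]

theorem mem_cn_of_mem_cn_union_of_mem_cn_union_neg {A : Set Fm} {φ ψ : Fm}
    (hpos : ψ ∈ Cn (A ∪ {φ})) (hneg : ψ ∈ Cn (A ∪ {neg φ})) : ψ ∈ Cn A := by
  refine mem_cn_of_entails [imp φ ψ, imp (neg φ) ψ]
    (by simp [imp_mem_cn_of_mem_cn_union hpos, imp_mem_cn_of_mem_cn_union hneg]) fun v hv => ?_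
  cases hφ : eval v φ <;> simp_all [imp, eval]

theorem not_consistent_iff {A : Set Fm} :
    ¬ Consistent A ↔ ∃ l : List Fm, (∀ φ ∈ l, φ ∈ A) ∧
      ∀ v : ℕ → Bool, ¬ ∀ φ ∈ l, eval v φ = true := by
  refine ⟨fun h => ?_, fun ⟨l, hlA, hl⟩ h => h (Set.eq_univ_of_forall fun ψ =>
    ⟨l, hlA, fun v hv => (hl v hv).elim⟩)⟩
  obtain ⟨l, hlA, hsem⟩ : conj (atom 0) (neg (atom 0)) ∈ Cn A := by
    rw [not_ne_iff.1 h]; trivial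
  exact ⟨l, hlA, fun v hv => by simpa [conj, eval] using hsem v hv⟩

theorem consistent_sUnion {c : Set (Set Fm)} (hc : ∀ Δ ∈ c, Consistent Δ)
    (hchain : IsChain (· ⊆ ·) c) (hne : c.Nonempty) : Consistent (⋃₀ c) := by
  by_contra h
  obtain ⟨l, hlc, hl⟩ := not_consistent_iff.1 h
  obtain ⟨Δ, hΔc, hlΔ⟩ := hchain.directedOn.exists_mem_subset_of_finite_of_subset_sUnion hne
    l.finite_toSet hlc
  exact not_consistent_iff.2 ⟨l, hlΔ, hl⟩ (hc Δ hΔc)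

theorem exists_mcs_superset {A : Set Fm} (h : Consistent A) : ∃ Γ, MCS Γ ∧ A ⊆ Γ := by
  obtain ⟨Γ, hAΓ, hmax⟩ := zorn_subset_nonempty {Δ | Consistent Δ}
    (fun c hc hchain hne => ⟨⋃₀ c, consistent_sUnion hc hchain hne,
      fun _ => Set.subset_sUnion_of_mem⟩) A h
  exact ⟨Γ, ⟨hmax.prop, fun Δ hΓΔ hΔ => hmax.eq_of_ge hΔ hΓΔ⟩, hAΓ⟩

theorem MCS.cn_eq {Γ : Set Fm} (h : MCS Γ) : Cn Γ = Γ :=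
  h.2 _ subset_cn (by rw [Consistent, cn_cn]; exact h.1)

theorem MCS.not_mem_of_neg_mem {Γ : Set Fm} (h : MCS Γ) {ψ : Fm} (hn : neg ψ ∈ Γ) : ψ ∉ Γ :=
  fun hψ => not_consistent_iff.2 ⟨[ψ, neg ψ], by simp [hψ, hn], fun v hv => by
    simp [eval] at hv⟩ h.1

theorem exists_mcs_superset_not_mem {A : Set Fm} {ψ : Fm} (h : ψ ∉ Cn A) :
    ∃ Γ, MCS Γ ∧ A ⊆ Γ ∧ ψ ∉ Γ := by
  have hcons : Consistent (A ∪ {neg ψ}) := fun hc =>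
    h (mem_cn_of_mem_cn_union_of_mem_cn_union_neg (subset_cn (Or.inr rfl)) (hc ▸ trivial))
  obtain ⟨Γ, hΓ, hAΓ⟩ := exists_mcs_superset hcons
  exact ⟨Γ, hΓ, (Set.union_subset_iff.1 hAΓ).1, hΓ.not_mem_of_neg_mem (hAΓ (Or.inr rfl))⟩

theorem mem_cn_iff_tsS_subset_tsF {A : Set Fm} {ψ : Fm} : ψ ∈ Cn A ↔ tsS A ⊆ tsF ψ := by
  refine ⟨fun h s hs => show ψ ∈ s.val from s.2.cn_eq ▸ cn_mono hs h,
    fun h => by_contra fun hψ => ?_⟩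
  obtain ⟨Γ, hΓ, hAΓ, hψΓ⟩ := exists_mcs_superset_not_mem hψ
  exact hψΓ (h (show (⟨Γ, hΓ⟩ : CS) ∈ tsS A from hAΓ))

theorem tsS_union_singleton (A : Set Fm) (α : Fm) : tsS (A ∪ {α}) = tsS A ∩ tsF α := by
  ext s
  simp [tsS, tsF, Set.insert_subset_iff, and_comm]

theorem contraction_eq_inter_cn_union_neg {K : Set Fm} {div : Fm → Set Fm}
    (hclosure : ∀ φ, div φ = Cn (div φ)) (hinclusion : ∀ φ, div φ ⊆ K)
    (hvacuity : ∀ φ, φ ∉ K → K ⊆ div φ) (hrecovery : ∀ φ, φ ∈ K → K ⊆ Cn (div φ ∪ {φ}))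
    (φ : Fm) : div φ = K ∩ Cn (div φ ∪ {neg φ}) := by
  refine subset_antisymm (fun ψ hψ => ⟨hinclusion φ hψ, subset_cn (Or.inl hψ)⟩) ?_
  rintro ψ ⟨hψK, hψ⟩
  by_cases hφK : φ ∈ K
  · rw [hclosure φ]
    exact mem_cn_of_mem_cn_union_of_mem_cn_union_neg (hrecovery φ hφK hψK) hψ
  · exact hvacuity φ hφK hψK

theorem canonical_representation_general (K : Set Fm)
    (hclosed : K = Cn K) (div : Fm → Set Fm) (hagm : AGM K div)
    (φ : Fm) :
    ∀ ψ : Fm, ψ ∈ div φ ↔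
      (tsS K ⊆ tsF ψ ∧ tsS (div φ) ∩ tsF (Fm.neg φ) ⊆ tsF ψ) := by
  intro ψ
  rw [← tsS_union_singleton, ← mem_cn_iff_tsS_subset_tsF, ← mem_cn_iff_tsS_subset_tsF,
    ← hclosed]
  exact Set.ext_iff.1
    (contraction_eq_inter_cn_union_neg hagm.closure hagm.inclusion hagm.vacuity hagm.recovery φ) ψ

/-- the representation theorem on the canonical space. -/
theorem canonical_representation (K : Set Fm) (hcons : Consistent K)
    (hclosed : K = Cn K) (div : Fm → Set Fm) (hagm : AGM K div)
    (φ : Fm) (hφ : (tsF (Fm.neg φ)).Nonempty) :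
    ∀ ψ : Fm, ψ ∈ div φ ↔
      (tsS K ⊆ tsF ψ ∧ tsS (div φ) ∩ tsF (Fm.neg φ) ⊆ tsF ψ) :=
  canonical_representation_general K hclosed div hagm φ
end
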